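/- Let V be a finite-dimensional complex vector space with a nondegenerate symmetric or antisymmetric bilinear form, and let 𝔭 = 𝔭(V) be the space of endomorphisms symmetric with respect to the form. Then the trace pairing (A,B) ↦ tr(AB) restricted to 𝔭 × 𝔭 is nondegenerate. -/

import Mathlib

/-!
Let `B*` be the adjoint of `B` with respect to the form. Since the form is symmetric or
antisymmetric, `B + B*` lies in `𝔭`, and for `A ∈ 𝔭` we have `tr (A B*) = tr ((B A)*) = tr (B A)`,
adjunction preserving traces. Hence `tr (A (B + B*)) = 2 tr (A B)`, so if `A` is orthogonal to
`𝔭` it is orthogonal to all of `End V` under the trace form, which is nondegenerate.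
-/

open LinearMap

theorem LinearMap.eq_zero_of_forall_trace_mul_eq_zero {R M : Type*} [CommRing R]
    [AddCommGroup M] [Module R M] [Module.Free R M] [Module.Finite R M]
    {A : Module.End R M} (h : ∀ B : Module.End R M, trace R M (A * B) = 0) : A = 0 := by
  let b := Module.Free.chooseBasis R M
  apply (toMatrix b b).injective
  rw [map_zero, Matrix.ext_iff_trace_mul_right]
  intro X
  simpa [trace_eq_matrix_trace R b, toMatrix_mul] using h ((toMatrix b b).symm X)

theorem LinearMap.IsAdjointPair.swap {R M N : Type*} [CommRing R] [AddCommGroup M] [Module R M]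
    [AddCommGroup N] [Module R N] {B : M →ₗ[R] M →ₗ[R] N}
    (hB : (∀ v w, B v w = B w v) ∨ (∀ v w, B v w = -B w v)) {f g : M → M}
    (h : IsAdjointPair B B f g) : IsAdjointPair B B g f := by
  intro x y
  rcases hB with hB | hB
  · rw [hB, ← h, hB]
  · rw [hB, ← h, hB, neg_neg]

theorem LinearMap.IsAdjointPair.trace_eq {K V : Type*} [Field K] [AddCommGroup V] [Module K V]
    [FiniteDimensional K V] {B : LinearMap.BilinForm K V} (hB : B.Nondegenerate)
    {f g : Module.End K V} (h : IsAdjointPair B B f g) : trace K V f = trace K V g := by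
  let e := B.toDual hB
  have hconj : e.conj f = Module.Dual.transpose (R := K) g := by
    ext φ v
    obtain ⟨x, rfl⟩ := e.surjective φ
    simp [e, LinearEquiv.conj_apply, BilinForm.toDual_def, Module.Dual.transpose_apply, h x v]
  rw [← trace_conj' f e, hconj, trace_transpose']

/-- For a finite-dimensional complex vector space `V` with a nondegenerate
symmetric or antisymmetric bilinear form, the trace pairing `(A,B) ↦ tr(AB)` restricted to
the symmetric endomorphisms `𝔭(V)` is nondegenerate. -/
theorem trace_pairing_nondegenerate_on_p
    (V : Type*) [AddCommGroup V] [Module ℂ V] [FiniteDimensional ℂ V]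
    (Ω : LinearMap.BilinForm ℂ V) (hΩ : Ω.Nondegenerate)
    (hform : (∀ v w, Ω v w = Ω w v) ∨ (∀ v w, Ω v w = -(Ω w v))) :
    ∀ A : Module.End ℂ V, (∀ v w, Ω (A v) w = Ω v (A w)) →
      (∀ C : Module.End ℂ V, (∀ v w, Ω (C v) w = Ω v (C w)) →
        LinearMap.trace ℂ V (A * C) = 0) →
      A = 0 := by
  intro A hA htr
  refine eq_zero_of_forall_trace_mul_eq_zero fun B ↦ ?_
  set B' := Ω.leftAdjointOfNondegenerate hΩ B
  have hB : IsAdjointPair Ω Ω B' B := Ω.isAdjointPairLeftAdjointOfNondegenerate hΩ B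
  have hsum : IsAdjointPair Ω Ω (B + B') (B + B') := by
    simpa only [LinearMap.add_apply, add_comm (⇑B')] using (hB.swap hform).add hB
  have hAB' : IsAdjointPair Ω Ω (A * B') (B * A) := IsAdjointPair.mul hA hB
  have h2 : trace ℂ V (A * (B + B')) = 2 * trace ℂ V (A * B) := by
    rw [mul_add, map_add, hAB'.trace_eq hΩ, trace_mul_comm ℂ B, two_mul]
  exact (mul_eq_zero.mp (h2 ▸ htr _ hsum)).resolve_left two_ne_zero
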